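/- For a ring R the following are equivalent: (i) every R-module is a Σ-Rickart module; (ii) every R-module is a Σ-dual Rickart module; (iii) R is a semisimple (artinian) ring. -/

import Mathlib

universe u v

/-- A module `M` is dual-Rickart if the image of every endomorphism is a direct summand. -/
def IsDualRickart (R : Type u) [Ring R] (M : Type v) [AddCommGroup M] [Module R M] : Prop :=
  ∀ φ : M →ₗ[R] M, ∃ q : Submodule R M, IsCompl (LinearMap.range φ) q

/-- A module `M` is Σ-dual Rickart if every direct sum of copies of `M` is dual-Rickart. -/
def IsSigmaDualRickart (R : Type u) [Ring R] (M : Type v) [AddCommGroup M] [Module R M] :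
    Prop :=
  ∀ Λ : Type v, IsDualRickart R (Λ →₀ M)

/-- A module `M` is Rickart if the kernel of every endomorphism is a direct summand. -/
def IsRickart (R : Type u) [Ring R] (M : Type v) [AddCommGroup M] [Module R M] : Prop :=
  ∀ φ : M →ₗ[R] M, ∃ q : Submodule R M, IsCompl (LinearMap.ker φ) q

/-- A module `M` is Σ-Rickart if every direct sum of copies of `M` is Rickart. -/
def IsSigmaRickart (R : Type u) [Ring R] (M : Type v) [AddCommGroup M] [Module R M] : Prop :=
  ∀ Λ : Type v, IsRickart R (Λ →₀ M)

/-!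
A submodule `N ≤ M` is the kernel of the endomorphism `(m, x) ↦ (0, m + N)` of `M × M ⧸ N`
and the image of the endomorphism `(m, n) ↦ (n, 0)` of `M × N`. A complement of `N × (M ⧸ N)`,
resp. of `N × 0`, projects to a complement of `N` in `M`; so if all modules are Rickart (or all
are dual-Rickart), every left ideal of `R` is a direct summand. Conversely, over a semisimple
ring every submodule of every module is a direct summand.
-/

open Submodule LinearMap

theorem Submodule.exists_isCompl_of_isCompl_prod {R M Q : Type*} [Ring R] [AddCommGroup M]
    [Module R M] [AddCommGroup Q] [Module R Q] {p : Submodule R M} {P : Submodule R Q}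
    {q : Submodule R (M × Q)} (h : IsCompl (p.prod P) q) : ∃ p' : Submodule R M, IsCompl p p' := by
  let π := (p.prod P).projectionOnto q h
  let f : M →ₗ[R] p := (LinearMap.fst R M Q ∘ₗ (p.prod P).subtype ∘ₗ π ∘ₗ inl R M Q).codRestrict p
    fun m => (π (m, 0)).2.1
  have hf (x : p) : f x = x := by
    have hx : ((x : M), (0 : Q)) ∈ p.prod P := ⟨x.2, P.zero_mem⟩
    apply Subtype.ext
    show (π ((x : M), 0) : M × Q).1 = x
    rw [projectionOnto_apply_of_mem_left h hx]
  exact ⟨ker f, isCompl_of_proj hf⟩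

section Transport

variable {R : Type u} [Ring R] {M N : Type v} [AddCommGroup M] [Module R M]
  [AddCommGroup N] [Module R N]

theorem IsRickart.of_linearEquiv (h : IsRickart R M) (e : M ≃ₗ[R] N) : IsRickart R N := by
  intro φ
  obtain ⟨q, hq⟩ := h ((e.symm : N →ₗ[R] M) ∘ₗ φ ∘ₗ (e : M →ₗ[R] N))
  have hker : ker ((e.symm : N →ₗ[R] M) ∘ₗ φ ∘ₗ (e : M →ₗ[R] N)) =
      (orderIsoMapComap e).symm (ker φ) := by
    ext; simp
  have hq' := (orderIsoMapComap e).isCompl (hker ▸ hq)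
  rw [OrderIso.apply_symm_apply] at hq'
  exact ⟨_, hq'⟩

theorem IsDualRickart.of_linearEquiv (h : IsDualRickart R M) (e : M ≃ₗ[R] N) :
    IsDualRickart R N := by
  intro φ
  obtain ⟨q, hq⟩ := h ((e.symm : N →ₗ[R] M) ∘ₗ φ ∘ₗ (e : M →ₗ[R] N))
  have hrange : range ((e.symm : N →ₗ[R] M) ∘ₗ φ ∘ₗ (e : M →ₗ[R] N)) =
      (orderIsoMapComap e).symm (range φ) := by
    simp [range_comp, map_equiv_eq_comap_symm]
  have hq' := (orderIsoMapComap e).isCompl (hrange ▸ hq)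
  rw [OrderIso.apply_symm_apply] at hq'
  exact ⟨_, hq'⟩

theorem IsSigmaRickart.isRickart (h : IsSigmaRickart R M) : IsRickart R M :=
  (h PUnit).of_linearEquiv (Finsupp.uniqueLinearEquiv R M PUnit.unit)

theorem IsSigmaDualRickart.isDualRickart (h : IsSigmaDualRickart R M) : IsDualRickart R M :=
  (h PUnit).of_linearEquiv (Finsupp.uniqueLinearEquiv R M PUnit.unit)

end Transport

section Semisimple

variable {R : Type u} [Ring R] {M : Type v} [AddCommGroup M] [Module R M]

theorem IsRickart.exists_isCompl_of_prod_quotient (N : Submodule R M)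
    (h : IsRickart R (M × (M ⧸ N))) : ∃ q : Submodule R M, IsCompl N q := by
  obtain ⟨q, hq⟩ := h (inr R M (M ⧸ N) ∘ₗ N.mkQ ∘ₗ LinearMap.fst R M (M ⧸ N))
  have hker : ker (inr R M (M ⧸ N) ∘ₗ N.mkQ ∘ₗ LinearMap.fst R M (M ⧸ N)) = N.prod ⊤ := by
    ext; simp [mem_prod]
  exact exists_isCompl_of_isCompl_prod (hker ▸ hq)

theorem IsDualRickart.exists_isCompl_of_prod (N : Submodule R M) (h : IsDualRickart R (M × N)) :
    ∃ q : Submodule R M, IsCompl N q := by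
  obtain ⟨q, hq⟩ := h (inl R M N ∘ₗ N.subtype ∘ₗ LinearMap.snd R M N)
  have hrange : range (inl R M N ∘ₗ N.subtype ∘ₗ LinearMap.snd R M N) = N.prod ⊥ := by
    rw [range_comp, range_comp, range_snd, Submodule.map_top, range_subtype, map_inl]
  exact exists_isCompl_of_isCompl_prod (hrange ▸ hq)

theorem IsSemisimpleModule.of_isRickart_prod_quotient
    (h : ∀ N : Submodule R M, IsRickart R (M × (M ⧸ N))) : IsSemisimpleModule R M where
  exists_isCompl N := (h N).exists_isCompl_of_prod_quotient N

theorem IsSemisimpleModule.of_isDualRickart_prod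
    (h : ∀ N : Submodule R M, IsDualRickart R (M × N)) : IsSemisimpleModule R M where
  exists_isCompl N := (h N).exists_isCompl_of_prod N

variable [IsSemisimpleRing R]

theorem IsSigmaRickart.of_isSemisimpleRing : IsSigmaRickart R M :=
  fun _ φ => exists_isCompl (ker φ)

theorem IsSigmaDualRickart.of_isSemisimpleRing : IsSigmaDualRickart R M :=
  fun _ φ => exists_isCompl (range φ)

end Semisimple

/-- For a ring `R`, the following are equivalent: every `R`-module is Σ-Rickart;
every `R`-module is Σ-dual Rickart; `R` is semisimple (artinian). -/
theorem stmt16 (R : Type u) [Ring R] :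
    ((∀ (M : Type u) [AddCommGroup M] [Module R M], IsSigmaRickart R M) ↔
        IsSemisimpleRing R) ∧
      ((∀ (M : Type u) [AddCommGroup M] [Module R M], IsSigmaDualRickart R M) ↔
        IsSemisimpleRing R) := by
  refine ⟨⟨fun h => ?_, fun _ _ _ _ => .of_isSemisimpleRing⟩,
    ⟨fun h => ?_, fun _ _ _ _ => .of_isSemisimpleRing⟩⟩
  · exact .of_isRickart_prod_quotient fun _ => (h _).isRickart
  · exact .of_isDualRickart_prod fun _ => (h _).isDualRickart
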